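/- Let F be a field of characteristic 2, u, v ∈ F* with u + v ≠ 0, and w ∈ F. Then in the Witt group W_q(F) one has ⟨1,u+v⟩_b ⊗ [1,w] = ⟨1,u⟩_b ⊗ [1, wu/(u+v)] + ⟨1,v⟩_b ⊗ [1, wv/(u+v)]. -/

import Mathlib

/-!  A concrete coefficient-matrix model of (possibly singular) finite-dimensional
quadratic forms over a field, suitable for characteristic 2. -/

/-- Coefficient representation of a (finite-dimensional) quadratic form over a field `F`:
the form of dimension `dim` given by `q(x) = ∑ i j, c i j * x i * x j`. -/
structure QF (F : Type*) [Field F] : Type _ where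
  dim : ℕ
  c : Matrix (Fin dim) (Fin dim) F

namespace QF

variable {F E : Type*} [Field F] [Field E]

/-- Evaluation of the quadratic form at a vector. -/
def eval (q : QF F) (x : Fin q.dim → F) : F :=
  ∑ i, ∑ j, q.c i j * x i * x j

/-- Scalar extension (base change) of a quadratic form along a ring homomorphism. -/
def map (f : F →+* E) (q : QF F) : QF E :=
  ⟨q.dim, fun i j => f (q.c i j)⟩

/-- Orthogonal sum. -/
def orthSum (q q' : QF F) : QF F :=
  ⟨q.dim + q'.dim,
    Matrix.reindex finSumFinEquiv finSumFinEquiv (Matrix.fromBlocks q.c 0 0 q'.c)⟩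

/-- Scaling `a • q`. -/
def smul (a : F) (q : QF F) : QF F := ⟨q.dim, a • q.c⟩

/-- The nonsingular binary quadratic form `[a,b] : (x,y) ↦ ax² + xy + by²`. -/
def bin (a b : F) : QF F := ⟨2, !![a, 1; 0, b]⟩

/-- The diagonal (totally singular) quadratic form `⟨a₁, …, aₙ⟩`. -/
def diag {n : ℕ} (v : Fin n → F) : QF F := ⟨n, Matrix.diagonal v⟩

/-- The zero-dimensional quadratic form. -/
def nil : QF F := { dim := 0, c := 0 }

/-- The one-dimensional form `⟨1⟩`. -/
def unit : QF F := diag (fun _ : Fin 1 => (1 : F))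

/-- Orthogonal sum of a list of forms. -/
def sumList (l : List (QF F)) : QF F := l.foldr orthSum nil

/-- `pfTensor [a₁,…,aₙ] q` is the tensor product `⟨⟨a₁,…,aₙ⟩⟩_b ⊗ q` of the bilinear
Pfister form `⟨⟨a₁,…,aₙ⟩⟩_b = ⟨1,a₁⟩_b ⊗ ⋯ ⊗ ⟨1,aₙ⟩_b` with the quadratic form `q`,
via `⟨1,a⟩_b ⊗ q ≅ q ⊥ a·q`. -/
def pfTensor (l : List F) (q : QF F) : QF F :=
  l.foldr (fun a r => orthSum r (smul a r)) q

/-- The hyperbolic plane `ℍ ≅ [0,0]`. -/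
def hypPlane : QF F := bin 0 0

/-- The orthogonal sum of `k` hyperbolic planes. -/
def hyp (k : ℕ) : QF F := sumList (List.replicate k hypPlane)

/-- The `l`-dimensional zero form `⟨0,…,0⟩`. -/
def zeros (l : ℕ) : QF F := diag (fun _ : Fin l => (0 : F))

/-- Isometry of quadratic forms. -/
def Isometric (q q' : QF F) : Prop :=
  ∃ e : (Fin q.dim → F) ≃ₗ[F] (Fin q'.dim → F), ∀ x, q'.eval (e x) = q.eval x

/-- Anisotropy: the form has no nontrivial zero. -/
def Anisotropic (q : QF F) : Prop := ∀ x, q.eval x = 0 → x = 0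

/-- A quadratic form is nonsingular if the radical of its polar form
`B_q(x,y) = q(x+y) - q(x) - q(y)` (with matrix `c + cᵀ`) is trivial. -/
def Nonsingular (q : QF F) : Prop := ∀ x, (q.c + q.c.transpose).mulVec x = 0 → x = 0

/-- A quadratic form is totally singular if its polar form vanishes identically. -/
def TotallySingular (q : QF F) : Prop := q.c + q.c.transpose = 0

/-- A quadratic form is hyperbolic if it is isometric to an orthogonal sum of
hyperbolic planes. -/
def Hyperbolic (q : QF F) : Prop := ∃ k, Isometric q (hyp k)

/-- Witt equivalence: `q ~ q'` iff the anisotropic parts agree, equivalently the two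
forms become isometric after adding suitable numbers of hyperbolic planes and zero
forms. -/
def WittEquiv (q q' : QF F) : Prop :=
  ∃ k k' l l', Isometric (orthSum q (orthSum (hyp k) (zeros l)))
    (orthSum q' (orthSum (hyp k') (zeros l')))

/-- `AnisoPartOf φ q` : `φ` is (isometric to) the anisotropic part of `q`, i.e. `φ` is
anisotropic and `q ≅ k × ℍ ⊥ φ ⊥ ⟨0,…,0⟩`. -/
def AnisoPartOf (φ q : QF F) : Prop :=
  Anisotropic φ ∧ ∃ k l, Isometric q (orthSum (hyp k) (orthSum φ (zeros l)))

/-- `Dominates q' q` means `q ≺ q'`, i.e. `q'` dominates `q`: there is an injective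
linear map `t` of the underlying spaces with `q' ∘ t = q`. -/
def Dominates (q' q : QF F) : Prop :=
  ∃ t : (Fin q.dim → F) →ₗ[F] (Fin q'.dim → F), Function.Injective t ∧
    ∀ x, q'.eval (t x) = q.eval x

/-- The affine quadric polynomial `∑ cᵢⱼ XᵢXⱼ` of a quadratic form. -/
noncomputable def toPoly (q : QF F) : MvPolynomial (Fin q.dim) F :=
  ∑ i, ∑ j, MvPolynomial.C (q.c i j) * (MvPolynomial.X i * MvPolynomial.X j)

/-- The affine coordinate ring of the (reduced) quadric `q = 0`. -/
abbrev CoordRing (q : QF F) : Type _ :=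
  MvPolynomial (Fin q.dim) F ⧸ (Ideal.span {q.toPoly}).radical

/-- The function field of the quadric `q = 0` (assuming the quadric is integral). -/
abbrev FunctionField (q : QF F) [IsDomain (CoordRing q)] : Type _ :=
  FractionRing (CoordRing q)

/-- The canonical ring homomorphism from a base field `F` into the function field of a
quadric defined over an extension field `K` of `F`. -/
noncomputable def toFunctionField {K : Type*} [Field K] [Algebra F K] (q : QF K)
    [IsDomain (CoordRing q)] : F →+* FunctionField q :=
  (algebraMap (CoordRing q) (FunctionField q)).comp
    ((algebraMap K (CoordRing q)).comp (algebraMap F K))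

end QF
/-! Write `s = u + v` and `c = w / s`. Since `x • [1, y] ≅ [x, y / x]`, the left side is
`[1, w] ⊥ [s, c]` and the right side is `[1, wu/s] ⊥ [u, c] ⊥ [1, wv/s] ⊥ [v, c]`.
In characteristic 2, `[a, c] ⊥ [b, d] ≅ [a + b, c] ⊥ [b, c + d]`; applied to the pairs
`[1, wu/s], [1, wv/s]` and `[u, c], [v, c]` it turns the right side into
`[1, w] ⊥ [s, c] ⊥ [0, wu/s] ⊥ [v, 0]`, and binary forms with a zero coefficient are
hyperbolic planes. -/

namespace QF

open Matrix QuadraticMap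

variable {F : Type*} [Field F]

noncomputable def toQuadraticForm (q : QF F) : QuadraticForm F (Fin q.dim → F) :=
  q.c.toQuadraticForm'

theorem toQuadraticForm_apply (q : QF F) (x : Fin q.dim → F) :
    q.toQuadraticForm x = q.eval x := by
  simp only [toQuadraticForm, Matrix.toQuadraticForm', LinearMap.BilinMap.toQuadraticMap_apply,
    Matrix.toLinearMap₂'_apply, eval, smul_eq_mul]
  exact Finset.sum_congr rfl fun _ _ => Finset.sum_congr rfl fun _ _ => by ring

theorem isometric_of_equivalent {q q' : QF F}
    (h : q.toQuadraticForm.Equivalent q'.toQuadraticForm) : Isometric q q' := by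
  obtain ⟨e⟩ := h
  exact ⟨e.toLinearEquiv, fun x => by
    rw [← toQuadraticForm_apply, ← toQuadraticForm_apply]
    exact e.map_app x⟩

theorem equivalent_of_mulVec {q q' : QF F} (P : Matrix (Fin q'.dim) (Fin q.dim) F)
    (P' : Matrix (Fin q.dim) (Fin q'.dim) F) (hPP' : P * P' = 1) (hP'P : P' * P = 1)
    (hP : ∀ x, q'.eval (P *ᵥ x) = q.eval x) :
    q.toQuadraticForm.Equivalent q'.toQuadraticForm :=
  ⟨{ toLinearEquiv := Matrix.toLin'OfInv hP'P hPP',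
      map_app' := fun x => by
        rw [toQuadraticForm_apply, toQuadraticForm_apply]
        exact hP x }⟩

theorem eval_orthSum (q q' : QF F) (x : Fin (q.orthSum q').dim → F) :
    (q.orthSum q').eval x =
      q.eval (fun i => x (Fin.castAdd q'.dim i)) + q'.eval (fun i => x (Fin.natAdd q.dim i)) := by
  simp only [eval, orthSum, Matrix.reindex_apply, Matrix.submatrix_apply]
  show ∑ i : Fin (q.dim + q'.dim), ∑ j : Fin (q.dim + q'.dim), _ = _
  rw [← finSumFinEquiv.sum_comp, Fintype.sum_sum_type]
  congr 1 <;>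
  · refine Finset.sum_congr rfl fun i _ => ?_
    rw [← finSumFinEquiv.sum_comp, Fintype.sum_sum_type]
    simp [Matrix.fromBlocks]

theorem orthSum_equivalent_prod (q q' : QF F) :
    (q.orthSum q').toQuadraticForm.Equivalent (q.toQuadraticForm.prod q'.toQuadraticForm) :=
  ⟨{ (LinearEquiv.funCongrLeft F F finSumFinEquiv.symm).symm.trans
        (LinearEquiv.sumArrowLequivProdArrow _ _ F F) with
      map_app' := fun x => by
        rw [QuadraticMap.prod_apply, toQuadraticForm_apply, toQuadraticForm_apply,
          toQuadraticForm_apply, eval_orthSum]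
        rfl }⟩

theorem orthSum_equivalent_of_dim_eq_zero (q q' : QF F) (h : q'.dim = 0) :
    (q.orthSum q').toQuadraticForm.Equivalent q.toQuadraticForm := by
  have : IsEmpty (Fin q'.dim) := by rw [h]; infer_instance
  refine (orthSum_equivalent_prod q q').trans
    ⟨{ LinearEquiv.prodUnique with map_app' := fun x => ?_ }⟩
  simp [Subsingleton.elim x.2 0]

theorem smul_bin_one_equivalent {a : F} (ha : a ≠ 0) (b : F) :
    (smul a (bin 1 b)).toQuadraticForm.Equivalent (bin a (b / a)).toQuadraticForm := by
  dsimp only [smul, bin]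
  refine equivalent_of_mulVec !![1, 0; 0, a] !![1, 0; 0, a⁻¹] (by rw [one_fin_two]; simp [ha])
    (by rw [one_fin_two]; simp [ha]) fun x => ?_
  simp only [eval, mulVec, dotProduct, Fin.sum_univ_two, of_apply, cons_val', cons_val_zero,
    cons_val_one, cons_val_fin_one, smul_of, Matrix.smul_apply, smul_eq_mul]
  field_simp
  ring

theorem bin_zero_left_equivalent_hypPlane (a : F) :
    (bin 0 a).toQuadraticForm.Equivalent (hypPlane : QF F).toQuadraticForm := by
  dsimp only [hypPlane, bin]
  refine equivalent_of_mulVec !![1, a; 0, 1] !![1, -a; 0, 1] (by rw [one_fin_two]; simp)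
    (by rw [one_fin_two]; simp) fun x => ?_
  simp only [eval, mulVec, dotProduct, Fin.sum_univ_two, of_apply, cons_val', cons_val_zero,
    cons_val_one, cons_val_fin_one]
  ring

theorem bin_zero_right_equivalent_hypPlane (a : F) :
    (bin a 0).toQuadraticForm.Equivalent (hypPlane : QF F).toQuadraticForm := by
  dsimp only [hypPlane, bin]
  refine equivalent_of_mulVec !![1, 0; a, 1] !![1, 0; -a, 1] (by rw [one_fin_two]; simp)
    (by rw [one_fin_two]; simp) fun x => ?_
  simp only [eval, mulVec, dotProduct, Fin.sum_univ_two, of_apply, cons_val', cons_val_zero,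
    cons_val_one, cons_val_fin_one]
  ring

theorem orthSum_bin_bin (a b c d : F) :
    (bin a c).orthSum (bin b d) = ⟨4, !![a, 1, 0, 0; 0, c, 0, 0; 0, 0, b, 1; 0, 0, 0, d]⟩ := by
  show (⟨4, ((bin a c).orthSum (bin b d)).c⟩ : QF F) = _
  congr 1
  ext i j
  fin_cases i <;> fin_cases j <;> rfl

theorem bin_prod_bin_equivalent [CharP F 2] (a b c d : F) :
    ((bin a c).toQuadraticForm.prod (bin b d).toQuadraticForm).Equivalent
      ((bin (a + b) c).toQuadraticForm.prod (bin b (c + d)).toQuadraticForm) := by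
  refine (orthSum_equivalent_prod _ _).symm.trans <|
    Equivalent.trans ?_ (orthSum_equivalent_prod _ _)
  rw [orthSum_bin_bin, orthSum_bin_bin]
  -- New basis `e₁ + e₂, f₁, e₂, f₂ - f₁`; `f₁ ⊥ f₂ - f₁` because `b(f₁, f₁) = 2c = 0`.
  refine equivalent_of_mulVec !![1, 0, 0, 0; 0, 1, 0, 1; -1, 0, 1, 0; 0, 0, 0, 1]
    !![1, 0, 0, 0; 0, 1, 0, -1; 1, 0, 1, 0; 0, 0, 0, 1] ?_ ?_ fun x => ?_
  · ext i j; fin_cases i <;> fin_cases j <;> simp [mul_apply, Fin.sum_univ_four]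
  · ext i j; fin_cases i <;> fin_cases j <;> simp [mul_apply, Fin.sum_univ_four]
  · simp only [eval, mulVec, dotProduct, Fin.sum_univ_four, of_apply, cons_val', cons_val_zero,
      cons_val_one, cons_val, cons_val_fin_one]
    linear_combination (b * x 0 ^ 2 - b * x 0 * x 2 + c * x 1 * x 3 + c * x 3 ^ 2) *
      CharTwo.two_eq_zero (R := F)

theorem bin_one_prod_bin_one_equivalent [CharP F 2] (a b : F) :
    ((bin 1 a).toQuadraticForm.prod (bin 1 b).toQuadraticForm).Equivalent
      ((bin 1 (a + b)).toQuadraticForm.prod (hypPlane : QF F).toQuadraticForm) := by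
  have h := bin_prod_bin_equivalent (1 : F) 1 a b
  rw [CharTwo.add_self_eq_zero] at h
  exact h.trans <| ((bin_zero_left_equivalent_hypPlane a).prod (Equivalent.refl _)).trans
    ⟨IsometryEquiv.prodComm _ _⟩

theorem bin_prod_bin_same_right_equivalent [CharP F 2] (a b c : F) :
    ((bin a c).toQuadraticForm.prod (bin b c).toQuadraticForm).Equivalent
      ((bin (a + b) c).toQuadraticForm.prod (hypPlane : QF F).toQuadraticForm) := by
  have h := bin_prod_bin_equivalent a b c c
  rw [CharTwo.add_self_eq_zero] at h
  exact h.trans <| (Equivalent.refl _).prod (bin_zero_right_equivalent_hypPlane b)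

theorem tensor_bin_one_equivalent {a : F} (ha : a ≠ 0) (b : F) :
    ((bin 1 b).orthSum (smul a (bin 1 b))).toQuadraticForm.Equivalent
      ((bin 1 b).toQuadraticForm.prod (bin a (b / a)).toQuadraticForm) :=
  (orthSum_equivalent_prod _ _).trans ((Equivalent.refl _).prod (smul_bin_one_equivalent ha b))

theorem tensor_bin_one_add_equivalent [CharP F 2] (a b c u v : F) :
    (((bin 1 a).toQuadraticForm.prod (bin u c).toQuadraticForm).prod
        ((bin 1 b).toQuadraticForm.prod (bin v c).toQuadraticForm)).Equivalent
      (((bin 1 (a + b)).toQuadraticForm.prod (bin (u + v) c).toQuadraticForm).prod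
        ((hypPlane : QF F).toQuadraticForm.prod (hypPlane : QF F).toQuadraticForm)) :=
  (Equivalent.trans ⟨IsometryEquiv.prodProdProdComm _ _ _ _⟩
    ((bin_one_prod_bin_one_equivalent a b).prod (bin_prod_bin_same_right_equivalent u v c))).trans
    ⟨IsometryEquiv.prodProdProdComm _ _ _ _⟩

theorem hyp_two_equivalent :
    (hyp 2 : QF F).toQuadraticForm.Equivalent
      ((hypPlane : QF F).toQuadraticForm.prod (hypPlane : QF F).toQuadraticForm) :=
  (orthSum_equivalent_prod _ _).trans
    ((Equivalent.refl _).prod (orthSum_equivalent_of_dim_eq_zero _ nil rfl))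

end QF

open QF in
/-- Over a field `F` of characteristic 2, for `u, v ∈ F*` with
`u + v ≠ 0` and `w ∈ F`, in `W_q(F)` one has
`⟨1,u+v⟩_b ⊗ [1,w] = ⟨1,u⟩_b ⊗ [1, wu/(u+v)] + ⟨1,v⟩_b ⊗ [1, wv/(u+v)]`. -/
theorem sum_relation
    (F : Type*) [Field F] [CharP F 2] (u v : F) (hu : u ≠ 0) (hv : v ≠ 0)
    (huv : u + v ≠ 0) (w : F) :
    WittEquiv ((bin 1 w).orthSum (smul (u + v) (bin 1 w)))
      (((bin 1 (w * u / (u + v))).orthSum (smul u (bin 1 (w * u / (u + v))))).orthSum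
        ((bin 1 (w * v / (u + v))).orthSum (smul v (bin 1 (w * v / (u + v)))))) := by
  have hu' : w * u / (u + v) / u = w / (u + v) := by field_simp
  have hv' : w * v / (u + v) / v = w / (u + v) := by field_simp
  have hw : w * u / (u + v) + w * v / (u + v) = w := by field_simp
  have lhs := (orthSum_equivalent_prod _ _).trans <| (tensor_bin_one_equivalent huv w).prod <|
    (orthSum_equivalent_of_dim_eq_zero (hyp 2) (zeros 0) rfl).trans hyp_two_equivalent
  have rhs := (orthSum_equivalent_of_dim_eq_zero _ ((hyp 0).orthSum (zeros 0)) rfl).trans <|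
    (orthSum_equivalent_prod _ _).trans <|
      (tensor_bin_one_equivalent hu (w * u / (u + v))).prod
        (tensor_bin_one_equivalent hv (w * v / (u + v)))
  rw [hu', hv'] at rhs
  have key := tensor_bin_one_add_equivalent (w * u / (u + v)) (w * v / (u + v)) (w / (u + v)) u v
  rw [hw] at key
  exact ⟨2, 0, 0, 0, isometric_of_equivalent (lhs.trans (rhs.trans key).symm)⟩
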